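/- If K ⊆ ℝ² is compact and A ⊆ ℝ² is open and bounded, then the union A ∪ K is strongly good: for every surjective isometry f : ℝ² → ℝ² with f(A ∪ K) ⊆ A ∪ K, one has f(A ∪ K) = A ∪ K. -/

import Mathlib

/-!
A self-isometry of a metric space that maps a compact set `C` into itself maps it onto `C`:
the orbit of any point of `C` returns arbitrarily close to that point. Now let `f` be a surjective
isometry with `f(F) ⊆ F`, where `F = A ∪ K` has compact closure. Then `f` preserves `cl F`, so
`f⁻¹` maps the missing part `N = cl F \ F` into itself and hence preserves its closure, which
misses the open set `A`. So `F ∩ cl N = K ∩ cl N` is compact and mapped into itself by `f`, hence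
onto itself. A point `y ∈ F` with `f⁻¹ y ∉ F` has `f⁻¹ y ∈ N`, so `y ∈ F ∩ cl N ⊆ f(F)`.
-/

open Set Function

abbrev Plane := EuclideanSpace ℝ (Fin 2)

/-- Geometric equality: some surjective isometry of the plane maps `S₁` onto `S₂`. -/
def GeomEq (S₁ S₂ : Set Plane) : Prop :=
  ∃ f : Plane → Plane, Isometry f ∧ Function.Surjective f ∧ f '' S₁ = S₂

/-- `S₁` is equal to or smaller than `S₂`: some surjective isometry maps `S₁` into `S₂`. -/
def GeomLe (S₁ S₂ : Set Plane) : Prop :=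
  ∃ f : Plane → Plane, Isometry f ∧ Function.Surjective f ∧ f '' S₁ ⊆ S₂

/-- A figure is good if `A ≤ B` and `B ≤ A` imply `A ≈ B` for every figure `B`. -/
def IsGood (A : Set Plane) : Prop :=
  ∀ B : Set Plane, GeomLe A B → GeomLe B A → GeomEq A B

/-- A figure is strongly good if every surjective isometry mapping it into itself maps it onto itself. -/
def IsStronglyGood (A : Set Plane) : Prop :=
  ∀ f : Plane → Plane, Isometry f → Function.Surjective f → f '' A ⊆ A → f '' A = A

section Isometry

variable {α : Type*}

theorem Isometry.iterate [PseudoEMetricSpace α] {f : α → α} (hf : Isometry f) :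
    ∀ n, Isometry f^[n]
  | 0 => isometry_id
  | n + 1 => (Isometry.iterate hf n).comp hf

variable [MetricSpace α]

theorem Isometry.image_eq_of_isCompact {f : α → α} (hf : Isometry f) {C : Set α}
    (hC : IsCompact C) (hfC : f '' C ⊆ C) : f '' C = C := by
  refine hfC.antisymm fun x hx => ?_
  have horbit : ∀ n, f^[n] x ∈ C := fun n => (mapsTo_iff_image_subset.2 hfC).iterate n hx
  obtain ⟨_, -, φ, hφ, hlim⟩ := hC.tendsto_subseq horbit
  rw [← (hC.image hf.continuous).isClosed.closure_eq, Metric.mem_closure_iff]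
  intro ε hε
  obtain ⟨N, hN⟩ := Metric.cauchySeq_iff'.1 hlim.cauchySeq ε hε
  obtain ⟨k, hk⟩ : ∃ k, φ (N + 1) = φ N + (k + 1) := Nat.exists_eq_add_of_lt (hφ N.lt_succ_self)
  refine ⟨f (f^[k] x), mem_image_of_mem f (horbit k), ?_⟩
  -- `dist x (f^[k + 1] x) = dist (f^[φ N] x) (f^[φ (N + 1)] x)`
  rw [← iterate_succ_apply' f k x, ← (hf.iterate (φ N)).dist_eq, ← iterate_add_apply, ← hk,
    dist_comm]
  exact hN (N + 1) N.le_succ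

theorem Isometry.image_closure_eq_of_image_subset {f : α → α} (hf : Isometry f) {S : Set α}
    (hS : IsCompact (closure S)) (hfS : f '' S ⊆ S) : f '' closure S = closure S :=
  hf.image_eq_of_isCompact hS <|
    (image_closure_subset_closure_image hf.continuous).trans (closure_mono hfS)

theorem IsometryEquiv.image_eq_of_image_subset (e : α ≃ᵢ α) {F : Set α}
    (hF : IsCompact (closure F)) (hFN : IsCompact (F ∩ closure (closure F \ F)))
    (heF : e '' F ⊆ F) : e '' F = F := by
  set N := closure F \ F
  have hclF : e '' closure F = closure F := e.isometry.image_closure_eq_of_image_subset hF heF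
  have hN : e.symm '' N ⊆ N := by
    rw [e.image_symm, preimage_sdiff]
    exact sdiff_subset_sdiff ((preimage_mono hclF.ge).trans (e.injective.preimage_image _).subset)
      (image_subset_iff.1 heF)
  have hclN : e '' closure N = closure N := by
    have hN' := e.symm.isometry.image_closure_eq_of_image_subset
      (hF.of_isClosed_subset isClosed_closure (closure_minimal sdiff_subset isClosed_closure)) hN
    conv_lhs => rw [← hN']
    exact e.image_symm_image _
  have hM : e '' (F ∩ closure N) = F ∩ closure N :=
    e.isometry.image_eq_of_isCompact hFN <| by
      rw [image_inter e.injective, hclN]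
      exact inter_subset_inter_left _ heF
  refine heF.antisymm fun y hy => ?_
  by_cases h : e.symm y ∈ F
  · exact ⟨_, h, e.apply_symm_apply y⟩
  · have hyN : e.symm y ∈ N := ⟨by
      rw [← mem_preimage, e.preimage_symm, hclF]; exact subset_closure hy, h⟩
    have hyclN : y ∈ e '' closure N := ⟨_, subset_closure hyN, e.apply_symm_apply y⟩
    rw [hclN] at hyclN
    have hyM : y ∈ F ∩ closure N := ⟨hy, hyclN⟩
    rw [← hM] at hyM
    exact image_mono inter_subset_left hyM

end Isometry

theorem IsOpen.isCompact_union_inter_closure_diff {X : Type*} [TopologicalSpace X] {A K : Set X}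
    (hA : IsOpen A) (hK : IsCompact K) (S : Set X) :
    IsCompact ((A ∪ K) ∩ closure (S \ (A ∪ K))) := by
  have : Disjoint A (closure (S \ (A ∪ K))) :=
    (disjoint_sdiff_right.mono_left subset_union_left).closure_right hA
  rw [union_inter_distrib_right, this.inter_eq, empty_union]
  exact hK.inter_right isClosed_closure

/-- Proposition 1.9: the union of a compact set with an open bounded set is strongly good. -/
theorem isStronglyGood_union (K A : Set Plane) (hK : IsCompact K)
    (hAo : IsOpen A) (hAb : Bornology.IsBounded A) : IsStronglyGood (A ∪ K) := by
  intro f hf hsurj hsub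
  let e : Plane ≃ᵢ Plane := IsometryEquiv.mk' f (surjInv hsurj) (rightInverse_surjInv hsurj) hf
  exact e.image_eq_of_image_subset (hAb.union hK.isBounded).isCompact_closure
    (hAo.isCompact_union_inter_closure_diff hK _) hsub
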